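/- arXiv:2502.13673 — 2 statements merged into one kernel-verified Lean document; each statement's English description precedes it below -/
import Mathlib

section
/- Let f ≠ -z be pseudo-involutory with f'(0)=1 and h_f = (√(zf))^ = z·h_o(z²) + z²·h_e(z²). Then h_o = √(1 + z·h_e²), i.e., h_o² - z·h_e² = 1 as formal power series. -/
/-!
Compute with Mathlib's `PowerSeries.subst`, which agrees with `pscomp`
whenever the inner series has no constant term. From `s² = X f` and `f ∘ (-f) = -X` we get
`(s ∘ (-f))² = s²`, so `s ∘ (-f) = -s`, the sign being read off the linear coefficient.
Composing with the inverse `t = sbar` gives `t ∘ (-s) = -f`, hence `t · t(-X) = -X²` after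
substituting `t` back. With `h = -t(-X) = X u(X²) + X² v(X²)` this product is
`-X² (u(X²)² - X² v(X²)²)`, so cancelling `X²` and undoing `X ↦ X²` yields `u² - X v² = 1`.
-/

open PowerSeries

/-- Composition `f ∘ g` of formal power series over `ℝ`, i.e. `f(g(z))`
(the usual composition when `g` has zero constant term). -/
noncomputable def pscomp (f g : PowerSeries ℝ) : PowerSeries ℝ :=
  PowerSeries.mk fun n => ∑ k ∈ Finset.range (n + 1), coeff k f * coeff n (g ^ k)

namespace PowerSeries

variable {R : Type*} [CommRing R]

theorem coeff_pow_eq_zero_of_lt {g : R⟦X⟧} (hg : constantCoeff g = 0) {n k : ℕ} (h : n < k) :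
    coeff n (g ^ k) = 0 :=
  coeff_of_lt_order n <| (Nat.cast_lt.mpr h).trans_le (le_order_pow_of_constantCoeff_eq_zero k hg)

theorem coeff_one_subst {g : R⟦X⟧} (hg : constantCoeff g = 0) (f : R⟦X⟧) :
    coeff 1 (f.subst g) = coeff 1 f * coeff 1 g := by
  rw [coeff_subst' (.of_constantCoeff_zero' hg), finsum_eq_single _ 1, pow_one, smul_eq_mul]
  intro d hd
  rcases Nat.lt_or_gt_of_ne hd with hd | hd
  · simp [Nat.lt_one_iff.mp hd]
  · rw [coeff_pow_eq_zero_of_lt hg hd, smul_zero]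

theorem subst_X_pow_injective {k : ℕ} (hk : k ≠ 0) :
    Function.Injective (subst (X ^ k : R⟦X⟧) : R⟦X⟧ → R⟦X⟧) := by
  intro p q h
  ext n
  simpa [hk] using congrArg (coeff (k * n)) h

theorem subst_injective_of_subst_eq_X {s t : R⟦X⟧} (hs : HasSubst s) (ht : HasSubst t)
    (h : s.subst t = X) : Function.Injective (subst s : R⟦X⟧ → R⟦X⟧) := by
  intro p q hpq
  simpa [subst_comp_subst_apply hs ht, h] using congrArg (subst t) hpq

theorem hasSubst_neg_X : HasSubst (-X : R⟦X⟧) := .of_constantCoeff_zero' (by simp)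

theorem subst_neg_X_subst_X_sq (q : R⟦X⟧) :
    subst (-X : R⟦X⟧) (subst (X ^ 2 : R⟦X⟧) q) = subst (X ^ 2 : R⟦X⟧) q := by
  rw [subst_comp_subst_apply (.X_pow two_ne_zero) hasSubst_neg_X, subst_pow hasSubst_neg_X,
    subst_X hasSubst_neg_X, neg_sq]

theorem subst_neg {a : R⟦X⟧} (ha : HasSubst a) (f : R⟦X⟧) : subst a (-f) = -subst a f := by
  rw [← coe_substAlgHom ha, map_neg]

theorem subst_neg_X_subst_neg_X (f : R⟦X⟧) : subst (-X : R⟦X⟧) (subst (-X : R⟦X⟧) f) = f := by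
  rw [subst_comp_subst_apply hasSubst_neg_X hasSubst_neg_X, subst_neg hasSubst_neg_X,
    subst_X hasSubst_neg_X, neg_neg, X_subst]

theorem subst_neg_eq_neg_of_sq_eq_X_mul [IsDomain R] [NeZero (2 : R)] {f s : R⟦X⟧}
    (hf0 : constantCoeff f = 0) (hf1 : coeff 1 f = 1) (hpi : subst (-f) f = -X)
    (hsq : s ^ 2 = X * f) (hs1 : coeff 1 s = 1) :
    subst (-f) s = -s := by
  have hnf0 : constantCoeff (-f) = 0 := by simp [hf0]
  have hnf : HasSubst (-f) := .of_constantCoeff_zero' hnf0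
  have hsq' : subst (-f) s ^ 2 = s ^ 2 := by
    rw [← subst_pow hnf, hsq, subst_mul hnf, subst_X hnf, hpi]
    ring
  refine (sq_eq_sq_iff_eq_or_eq_neg.mp hsq').resolve_left fun h => ?_
  have h1 := congrArg (coeff 1) h
  rw [coeff_one_subst hnf0, hs1, map_neg, hf1, one_mul, neg_eq_iff_add_eq_zero,
    one_add_one_eq_two] at h1
  exact two_ne_zero h1

theorem mul_subst_neg_X_eq_neg_X_sq {f s t : R⟦X⟧} (hf0 : constantCoeff f = 0)
    (hs : HasSubst s) (ht : HasSubst t) (hst : subst t s = X) (hts : subst s t = X)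
    (hsq : s ^ 2 = X * f) (hsf : subst (-f) s = -s) :
    t * subst (-X) t = -X ^ 2 := by
  have hnf : HasSubst (-f) := .of_constantCoeff_zero' (by simp [hf0])
  have ht_neg : subst (-s) t = -f := by
    rw [← hsf, ← subst_comp_subst_apply hs hnf, hts, subst_X hnf]
  apply subst_injective_of_subst_eq_X hs ht hst
  rw [subst_mul hs, hts, subst_comp_subst_apply hasSubst_neg_X hs, subst_neg hs, subst_X hs,
    ht_neg, subst_neg hs, subst_pow hs, subst_X hs, hsq]
  ring

theorem sq_sub_X_mul_sq_eq_one {h u v : R⟦X⟧}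
    (hdec : h = X * subst (X ^ 2 : R⟦X⟧) u + X ^ 2 * subst (X ^ 2 : R⟦X⟧) v)
    (hh : h * subst (-X) h = -X ^ 2) :
    u ^ 2 - X * v ^ 2 = 1 := by
  have hX2 : HasSubst (X ^ 2 : R⟦X⟧) := .X_pow two_ne_zero
  have h_neg : subst (-X) h = -X * subst (X ^ 2 : R⟦X⟧) u + X ^ 2 * subst (X ^ 2 : R⟦X⟧) v := by
    rw [hdec, subst_add hasSubst_neg_X, subst_mul hasSubst_neg_X, subst_mul hasSubst_neg_X,
      subst_pow hasSubst_neg_X, subst_X hasSubst_neg_X, subst_neg_X_subst_X_sq,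
      subst_neg_X_subst_X_sq, neg_sq]
  have hsubst : subst (X ^ 2 : R⟦X⟧) (u ^ 2 - X * v ^ 2) = subst (X ^ 2 : R⟦X⟧) (1 : R⟦X⟧) := by
    simp only [← coe_substAlgHom hX2, map_one, map_sub, map_mul, map_pow]
    rw [coe_substAlgHom, subst_X hX2]
    apply X_pow_mul_cancel (k := 2)
    rw [h_neg, hdec] at hh
    linear_combination -hh
  exact subst_X_pow_injective two_ne_zero hsubst

end PowerSeries

theorem pscomp_eq_subst (f : ℝ⟦X⟧) {g : ℝ⟦X⟧} (hg : constantCoeff g = 0) :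
    pscomp f g = f.subst g := by
  ext n
  rw [coeff_subst' (.of_constantCoeff_zero' hg),
    finsum_eq_sum_of_support_subset _ (s := Finset.range (n + 1)) ?_]
  · simp [pscomp, smul_eq_mul]
  · intro d hd
    by_contra h
    simp only [Finset.coe_range, Set.mem_Iio, not_lt] at h
    exact hd (by simp [coeff_pow_eq_zero_of_lt hg h])

theorem constantCoeff_pscomp (f g : ℝ⟦X⟧) : constantCoeff (pscomp f g) = constantCoeff f := by
  rw [← coeff_zero_eq_constantCoeff_apply, pscomp, coeff_mk]
  simp

theorem stmt_6_general (f s sbar ho he : PowerSeries ℝ)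
    (hf0 : constantCoeff f = 0) (hf1 : coeff 1 f = 1)
    (hpi : pscomp f (-f) = -X)
    (hsq : s ^ 2 = X * f) (hs0 : constantCoeff s = 0) (hs1 : coeff 1 s = 1)
    (hi1 : pscomp s sbar = X) (hi2 : pscomp sbar s = X)
    (hdec : -(pscomp sbar (-X)) = X * pscomp ho (X ^ 2) + X ^ 2 * pscomp he (X ^ 2)) :
    ho ^ 2 - X * he ^ 2 = 1 := by
  have hsbar0 : constantCoeff sbar = 0 := by
    rw [← constantCoeff_pscomp sbar s, hi2, constantCoeff_X]
  rw [pscomp_eq_subst _ (by simp [hf0])] at hpi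
  rw [pscomp_eq_subst _ hsbar0] at hi1
  rw [pscomp_eq_subst _ hs0] at hi2
  simp only [pscomp_eq_subst _ (by simp : constantCoeff (X ^ 2 : ℝ⟦X⟧) = 0),
    pscomp_eq_subst _ (by simp : constantCoeff (-X : ℝ⟦X⟧) = 0)] at hdec
  have hsf := subst_neg_eq_neg_of_sq_eq_X_mul hf0 hf1 hpi hsq hs1
  have hprod := mul_subst_neg_X_eq_neg_X_sq hf0 (.of_constantCoeff_zero' hs0)
    (.of_constantCoeff_zero' hsbar0) hi1 hi2 hsq hsf
  refine sq_sub_X_mul_sq_eq_one hdec ?_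
  rw [subst_neg hasSubst_neg_X, subst_neg_X_subst_neg_X]
  linear_combination hprod

/-- For pseudo-involutory f ≠ -z, writing h_f = (√(zf))^ as
h_f(z) = z·h_o(z²) + z²·h_e(z²), one has h_o² - z·h_e² = 1,
i.e. h_o = √(1 + z·h_e²). -/
theorem stmt_6 (f s sbar ho he : PowerSeries ℝ)
    (hf0 : constantCoeff f = 0) (hf1 : coeff 1 f = 1)
    (hpi : pscomp f (-f) = -X) (hne : f ≠ -X)
    (hsq : s ^ 2 = X * f) (hs0 : constantCoeff s = 0) (hs1 : coeff 1 s = 1)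
    (hi1 : pscomp s sbar = X) (hi2 : pscomp sbar s = X)
    (hdec : -(pscomp sbar (-X)) = X * pscomp ho (X ^ 2) + X ^ 2 * pscomp he (X ^ 2)) :
    ho ^ 2 - X * he ^ 2 = 1 :=
  stmt_6_general f s sbar ho he hf0 hf1 hpi hsq hs0 hs1 hi1 hi2 hdec
end

section
/- Let γ(z) = a + bz with a + b ≠ 0, and let g satisfy g = 1 + z·γ(g). Then g = (1+az)/(1-bz), its pseudo-involutory companion is f = z/(1-(b-a)z), and the B-function of f is the constant b - a. -/
open PowerSeries

open Finset

private lemma coeff_pow_eq_zero {g : PowerSeries ℝ} (hg : constantCoeff g = 0)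
    {n k : ℕ} (h : n < k) : coeff n (g ^ k) = 0 := by
  obtain ⟨h', rfl⟩ := X_dvd_iff.mpr hg
  rw [mul_pow, coeff_mul]
  apply Finset.sum_eq_zero
  intro p hp
  rw [coeff_X_pow, if_neg, zero_mul]
  have := Finset.HasAntidiagonal.antidiagonal.fst_le hp
  omega

private lemma coeff_eval₂ {g : PowerSeries ℝ} (hg : constantCoeff g = 0)
    (P : Polynomial ℝ) (n : ℕ) :
    coeff n (P.eval₂ C g) = ∑ i ∈ range (n + 1), P.coeff i * coeff n (g ^ i) := by
  rw [Polynomial.eval₂_eq_sum_range, map_sum]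
  simp only [map_mul, coeff_C_mul]
  have e1 : ∑ i ∈ range (P.natDegree + 1), P.coeff i * coeff n (g ^ i)
      = ∑ i ∈ range (max (P.natDegree + 1) (n + 1)), P.coeff i * coeff n (g ^ i) := by
    apply Finset.sum_subset (Finset.range_subset_range.mpr (le_max_left _ _))
    intro i _ hi
    rw [Polynomial.coeff_eq_zero_of_natDegree_lt, zero_mul]
    simp only [Finset.mem_range] at hi; omega
  have e2 : ∑ i ∈ range (n + 1), P.coeff i * coeff n (g ^ i)
      = ∑ i ∈ range (max (P.natDegree + 1) (n + 1)), P.coeff i * coeff n (g ^ i) := by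
    apply Finset.sum_subset (Finset.range_subset_range.mpr (le_max_right _ _))
    intro i _ hi
    rw [coeff_pow_eq_zero hg, mul_zero]
    simp only [Finset.mem_range] at hi; omega
  rw [e1, e2]

private lemma coeff_pscomp {g : PowerSeries ℝ} (hg : constantCoeff g = 0)
    (f : PowerSeries ℝ) {m n : ℕ} (hmn : m ≤ n) :
    coeff m (pscomp f g) = coeff m ((trunc (n + 1) f).eval₂ C g) := by
  rw [coeff_eval₂ hg, pscomp, coeff_mk]
  apply Finset.sum_congr rfl
  intro i hi
  rw [coeff_trunc, if_pos]
  rw [Finset.mem_range] at hi; omega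

private lemma pscomp_mul {g : PowerSeries ℝ} (hg : constantCoeff g = 0)
    (f₁ f₂ : PowerSeries ℝ) :
    pscomp (f₁ * f₂) g = pscomp f₁ g * pscomp f₂ g := by
  ext n
  rw [coeff_pscomp hg _ (le_refl n)]
  have step1 : coeff n ((trunc (n + 1) (f₁ * f₂)).eval₂ C g)
      = coeff n ((trunc (n + 1) f₁ * trunc (n + 1) f₂).eval₂ C g) := by
    rw [coeff_eval₂ hg, coeff_eval₂ hg]
    apply Finset.sum_congr rfl
    intro i hi
    rw [Finset.mem_range] at hi
    congr 1
    have : (trunc (n + 1) f₁ * trunc (n + 1) f₂).coeff i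
        = coeff i ((↑(trunc (n + 1) f₁) * ↑(trunc (n + 1) f₂) : PowerSeries ℝ)) := by
      rw [← Polynomial.coe_mul, Polynomial.coeff_coe]
    rw [this, ← coeff_coe_trunc_of_lt hi, trunc_trunc_mul_trunc, coeff_coe_trunc_of_lt hi,
      coeff_trunc, if_pos hi]
  rw [step1, Polynomial.eval₂_mul, coeff_mul, coeff_mul]
  apply Finset.sum_congr rfl
  intro p hp
  have h1 := Finset.HasAntidiagonal.antidiagonal.fst_le hp
  have h2 := Finset.HasAntidiagonal.antidiagonal.snd_le hp
  rw [coeff_pscomp hg f₁ h1, coeff_pscomp hg f₂ h2]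

private lemma pscomp_add (g f₁ f₂ : PowerSeries ℝ) :
    pscomp (f₁ + f₂) g = pscomp f₁ g + pscomp f₂ g := by
  ext n
  simp [pscomp, add_mul, Finset.sum_add_distrib]

private lemma pscomp_sub (g f₁ f₂ : PowerSeries ℝ) :
    pscomp (f₁ - f₂) g = pscomp f₁ g - pscomp f₂ g := by
  ext n
  simp [pscomp, sub_mul, Finset.sum_sub_distrib]

private lemma pscomp_C (c : ℝ) (g : PowerSeries ℝ) : pscomp (C c) g = C c := by
  ext n
  rw [pscomp, coeff_mk, Finset.sum_eq_single 0]
  · rw [pow_zero]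
    simp only [coeff_C, coeff_one, if_pos rfl]
    split_ifs <;> simp
  · intro i _ hi
    simp [coeff_C, hi]
  · intro h
    simp at h

private lemma pscomp_one (g : PowerSeries ℝ) : pscomp 1 g = 1 := by
  have := pscomp_C 1 g
  simpa using this

private lemma pscomp_X {g : PowerSeries ℝ} (hg : constantCoeff g = 0) :
    pscomp X g = g := by
  ext n
  rw [pscomp, coeff_mk]
  cases n with
  | zero => simpa [coeff_X] using hg.symm
  | succ m =>
    simp [coeff_X, ite_mul, Finset.sum_ite_eq]

/-- For γ(z) = a + bz with a + b ≠ 0 and g = 1 + z·γ(g) :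
g = (1+az)/(1-bz), the pseudo-involutory companion is f = z/(1-(b-a)z),
and the B-function of f is the constant b - a. -/
theorem stmt_12 (a b : ℝ) (hab : a + b ≠ 0)
    (g : PowerSeries ℝ) (hg0 : constantCoeff g = 1)
    (hgeq : g = 1 + X * (C a + C b * g)) :
    g = (1 + C a * X) * (1 - C b * X)⁻¹ ∧
      pscomp (X * (1 - C (b - a) * X)⁻¹) (-(X * (1 - C (b - a) * X)⁻¹)) = -X ∧
      g * pscomp g (-(X * (1 - C (b - a) * X)⁻¹)) = 1 ∧
      X * (1 - C (b - a) * X)⁻¹ - X =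
        X * (X * (1 - C (b - a) * X)⁻¹) *
          pscomp (C (b - a)) (X * (X * (1 - C (b - a) * X)⁻¹)) := by
  have hc : C (b - a) = C b - C a := map_sub _ _ _
  obtain ⟨f, hfdef⟩ : ∃ f : PowerSeries ℝ, f = X * (1 - C (b - a) * X)⁻¹ := ⟨_, rfl⟩
  rw [← hfdef]
  have hDne : constantCoeff (1 - C (b - a) * X) ≠ 0 := by simp
  have hfD : f * (1 - C (b - a) * X) = X := by
    rw [hfdef]
    calc X * (1 - C (b - a) * X)⁻¹ * (1 - C (b - a) * X)
        = X * ((1 - C (b - a) * X) * (1 - C (b - a) * X)⁻¹) := by ring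
    _ = X := by rw [PowerSeries.mul_inv_cancel _ hDne, mul_one]
  have hfe : f = X + C (b - a) * (X * f) := by linear_combination hfD
  have hf0 : constantCoeff f = 0 := by rw [hfdef]; simp
  have hnf0 : constantCoeff (-f) = 0 := by simp [hf0]
  have h1 : (1 - C b * X) * g = 1 + C a * X := by linear_combination hgeq
  have p1 : g = (1 + C a * X) * (1 - C b * X)⁻¹ := by
    rw [PowerSeries.eq_mul_inv_iff_mul_eq (by simp)]
    linear_combination h1
  -- part 2
  have hXf : f - C (b - a) * (X * f) = X := by linear_combination hfD
  have hps : pscomp (f - C (b - a) * (X * f)) (-f) = pscomp X (-f) := by rw [hXf]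
  rw [pscomp_sub, pscomp_mul hnf0, pscomp_mul hnf0, pscomp_C, pscomp_X hnf0] at hps
  have hne1 : (1 : PowerSeries ℝ) + C (b - a) * f ≠ 0 := by
    intro h
    have h' := congrArg constantCoeff h
    simp [hf0] at h'
  have p2 : pscomp f (-f) = -X := by
    apply mul_right_cancel₀ hne1
    linear_combination hps - hfe
  -- part 3
  have hG : pscomp ((1 - C b * X) * g) (-f) = pscomp (1 + C a * X) (-f) := by rw [h1]
  simp only [pscomp_mul hnf0, pscomp_sub, pscomp_add, pscomp_one, pscomp_C,
    pscomp_X hnf0] at hG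
  have hD_ne : (1 - C (b - a) * X) ≠ 0 := by
    intro h
    have h' := congrArg constantCoeff h
    simp at h'
  have hfD2 : f * (1 - (C b - C a) * X) = X := by rw [← hc]; exact hfD
  have E : (1 - C b * X) * (1 + C b * f) = (1 + C a * X) * (1 - C a * f) := by
    apply mul_right_cancel₀ hD_ne
    rw [hc]
    linear_combination ((1 - C b * X) * C b + (1 + C a * X) * C a) * hfD2
  have hE_ne : (1 - C b * X) * (1 + C b * f) ≠ 0 := by
    apply mul_ne_zero
    · intro h
      have h' := congrArg constantCoeff h
      simp at h'
    · intro h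
      have h' := congrArg constantCoeff h
      simp [hf0] at h'
  have p3 : g * pscomp g (-f) = 1 := by
    apply mul_right_cancel₀ hE_ne
    linear_combination ((1 + C b * f) * pscomp g (-f)) * h1 + (1 + C a * X) * hG - E
  -- part 4
  have p4 : f - X = X * f * pscomp (C (b - a)) (X * f) := by
    rw [pscomp_C]
    linear_combination hfD
  exact ⟨p1, p2, p3, p4⟩
end
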